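/- arXiv:2412.18400 — 2 statements merged into one kernel-verified Lean document; each statement's English description precedes it below -/
import Mathlib

section
/- Let n ≥ 3, let W be a weight with w_{i,j} > 0 for all 1 ≤ i < j ≤ n, and let C be a simple cycle of even length 2m in G_n, given by distinct vertices v_0, v_1, …, v_{2m−1} with v_k adjacent to v_{k+1} (indices mod 2m), which has a symmetric labeling, i.e., the unique element of dsc(v_k, v_{k+1}) equals the unique element of dsc(v_{k+m}, v_{k+m+1}) for every k. Suppose that for every index pair (i,j) occurring as a label of some edge of C, the number of edges of C labeled (i,j) equals 2(2k−1) for some positive integer k (depending on the label). Then for every two distinct, non-opposite vertices π = v_a and φ = v_b of C (i.e., a ≠ b and b ≠ a + m mod 2m), the four points π, φ and their opposite vertices π̄ = v_{a+m}, φ̄ = v_{b+m} form a pseudolinear quadruple in (S_n, d_W), with d_W(π,φ) = d_W(π̄,φ̄) = s, d_W(φ,π̄) = d_W(π,φ̄) = t, and d_W(π,π̄) = d_W(φ,φ̄) = s + t for some positive reals s, t. -/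
open Finset

/-- The set of index pairs `(i,j)` with `i < j`. -/
def pairs (n : ℕ) : Finset (Fin n × Fin n) :=
  Finset.univ.filter (fun p => p.1 < p.2)

/-- The discordance set of two permutations: all pairs `i < j` with
`(π_j - π_i)(φ_j - φ_i) < 0`. -/
def dsc (n : ℕ) (π φ : Equiv.Perm (Fin n)) : Finset (Fin n × Fin n) :=
  (pairs n).filter (fun p =>
    ((π p.2 : ℤ) - (π p.1 : ℤ)) * ((φ p.2 : ℤ) - (φ p.1 : ℤ)) < 0)

/-- `W` is a weight: a strictly upper triangular matrix of nonnegative reals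
with positive total sum. -/
def IsWeight (n : ℕ) (W : Fin n → Fin n → ℝ) : Prop :=
  (∀ i j : Fin n, ¬ i < j → W i j = 0) ∧ (∀ i j : Fin n, 0 ≤ W i j) ∧
    0 < ∑ p ∈ pairs n, W p.1 p.2

/-- The weighted Kendall tau distance. -/
noncomputable def dW (n : ℕ) (W : Fin n → Fin n → ℝ) (π φ : Equiv.Perm (Fin n)) : ℝ :=
  (∑ p ∈ dsc n π φ, W p.1 p.2) / (∑ p ∈ pairs n, W p.1 p.2)
lemma dsc_comm (n : ℕ) (π φ : Equiv.Perm (Fin n)) : dsc n π φ = dsc n φ π := by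
  ext p
  simp only [dsc, Finset.mem_filter]
  rw [mul_comm]

/-- The edge graph of the permutohedron of order `n`: two permutations are
adjacent iff their discordance set is a singleton. -/
def Gn (n : ℕ) : SimpleGraph (Equiv.Perm (Fin n)) where
  Adj π φ := (dsc n π φ).card = 1
  symm := by
    constructor
    intro π φ h
    rwa [dsc_comm]
  loopless := by
    constructor
    intro π h
    have he : dsc n π π = ∅ := by
      ext p
      simp only [dsc, Finset.mem_filter, Finset.notMem_empty, iff_false, not_and]
      intro _
      exact not_lt.mpr (mul_self_nonneg _)
    rw [he] at h
    simp at h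

/-!
A pair `p` is discordant for the endpoints of a walk in `S_n` iff an odd number of steps of the
walk flip `p`. By the symmetric labeling, both halves of the cycle flip each label equally often,
so a half cycle flips every label `2k - 1` times, an odd number. Hence, for `x ≤ y ≤ x + m`, the
discordance sets of `(v x, v y)` and `(v y, v (x + m))` are disjoint with union the set of all
labels, which is the discordance set of `(v x, v (x + m))`; so `d_W` is additive along every half
cycle, and shifting by `m` preserves discordance sets. Together these give all six relations.
-/

open Equiv Function

theorem Bool.ne_iff_odd_card_changes (f : ℕ → Bool) {k l : ℕ} (hkl : k ≤ l) :
    f k ≠ f l ↔ Odd #{j ∈ Ico k l | f j ≠ f (j + 1)} := by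
  induction l, hkl using Nat.le_induction with
  | base => simp
  | succ l hkl ih =>
    rw [Nat.Ico_succ_right_eq_insert_Ico hkl, filter_insert]
    split_ifs with hl
    · rw [card_insert_of_notMem (by simp), Nat.odd_add_one, ← ih]
      revert hl; cases f k <;> cases f l <;> cases f (l + 1) <;> simp
    · rw [← ih]
      revert hl; cases f k <;> cases f l <;> cases f (l + 1) <;> simp

lemma mem_dsc_iff {n : ℕ} {π φ : Perm (Fin n)} {p : Fin n × Fin n} :
    p ∈ dsc n π φ ↔ p.1 < p.2 ∧ decide (π p.1 < π p.2) ≠ decide (φ p.1 < φ p.2) := by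
  obtain ⟨i, j⟩ := p
  simp only [dsc, pairs, mem_filter, mem_univ, true_and, and_congr_right_iff]
  intro hij
  have hπ : π i ≠ π j := π.injective.ne hij.ne
  have hφ : φ i ≠ φ j := φ.injective.ne hij.ne
  rw [mul_neg_iff, sub_pos, sub_pos, sub_neg, sub_neg]
  simp only [Nat.cast_lt, Fin.val_fin_lt]
  rcases hπ.lt_or_gt with h | h <;> rcases hφ.lt_or_gt with h' | h' <;>
    simp [h, h', h.not_gt, h'.not_gt]

lemma eq_of_dsc_eq_empty {n : ℕ} {π φ : Perm (Fin n)} (h : dsc n π φ = ∅) : π = φ := by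
  have hlt : ∀ i j, π i < π j → φ i < φ j := by
    intro i j hij
    have hne : i ≠ j := by rintro rfl; exact hij.false
    rcases hne.lt_or_gt with h' | h'
    · have : (i, j) ∉ dsc n π φ := by simp [h]
      simpa [mem_dsc_iff, h', hij] using this
    · have : (j, i) ∉ dsc n π φ := by simp [h]
      simp only [mem_dsc_iff, h', hij.not_gt, decide_false, true_and, ne_eq,
        Bool.false_eq, decide_eq_false_iff_not, not_not, not_lt] at this
      exact this.lt_of_ne (φ.injective.ne hne)
  have hmono : StrictMono (φ ∘ π.symm) := fun x y hxy => hlt _ _ (by simpa using hxy)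
  ext i : 1
  simpa using (hmono.apply_eq (x := π i)).symm

lemma dsc_nonempty_of_ne {n : ℕ} {π φ : Perm (Fin n)} (h : π ≠ φ) :
    (dsc n π φ).Nonempty :=
  nonempty_iff_ne_empty.2 fun he => h (eq_of_dsc_eq_empty he)

lemma dW_comm (n : ℕ) (W : Fin n → Fin n → ℝ) (π φ : Perm (Fin n)) :
    dW n W π φ = dW n W φ π := by
  rw [dW, dW, dsc_comm]

lemma dW_pos {n : ℕ} {W : Fin n → Fin n → ℝ} (hW : IsWeight n W)
    (hpos : ∀ i j : Fin n, i < j → 0 < W i j) {π φ : Perm (Fin n)} (h : π ≠ φ) :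
    0 < dW n W π φ :=
  div_pos (sum_pos (fun _ hp => hpos _ _ (mem_dsc_iff.1 hp).1) (dsc_nonempty_of_ne h)) hW.2.2

section Walk

variable {n : ℕ} (w : ℕ → Perm (Fin n))

def flipCount (p : Fin n × Fin n) (k l : ℕ) : ℕ :=
  #{j ∈ Ico k l | p ∈ dsc n (w j) (w (j + 1))}

def LabelsPeriodic (d : ℕ) : Prop :=
  Periodic (fun j => dsc n (w j) (w (j + 1))) d

variable {w}

lemma mem_dsc_iff_odd_flipCount {p : Fin n × Fin n} {k l : ℕ} (hkl : k ≤ l) :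
    p ∈ dsc n (w k) (w l) ↔ p.1 < p.2 ∧ Odd (flipCount w p k l) := by
  rw [mem_dsc_iff, and_congr_right_iff]
  intro hp
  simp only [flipCount, mem_dsc_iff, hp, true_and]
  exact Bool.ne_iff_odd_card_changes (fun j => decide (w j p.1 < w j p.2)) hkl

lemma flipCount_add {p : Fin n × Fin n} {k l j : ℕ} (hkl : k ≤ l) (hlj : l ≤ j) :
    flipCount w p k l + flipCount w p l j = flipCount w p k j := by
  simp only [flipCount, card_filter]
  exact sum_Ico_consecutive _ hkl hlj

lemma flipCount_add_add {d : ℕ} (hd : LabelsPeriodic w d)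
    (p : Fin n × Fin n) (k l : ℕ) :
    flipCount w p (k + d) (l + d) = flipCount w p k l := by
  simp only [flipCount, card_filter]
  rw [← sum_Ico_add']
  exact sum_congr rfl fun j _ => by rw [show dsc n (w (j + d)) (w (j + d + 1)) = _ from hd j]

lemma flipCount_self_add {d : ℕ} (hd : LabelsPeriodic w d)
    (p : Fin n × Fin n) (k : ℕ) :
    flipCount w p k (k + d) = flipCount w p 0 d := by
  have h₁ := flipCount_add (w := w) (p := p) (Nat.zero_le k) (Nat.le_add_right k d)
  have h₂ := flipCount_add (w := w) (p := p) (Nat.zero_le d) (Nat.le_add_left d k)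
  have h₃ := flipCount_add_add hd p 0 k
  rw [zero_add] at h₃
  omega

lemma dW_eq_add_of_flipCount {W : Fin n → Fin n → ℝ} {x y z : ℕ} (hxy : x ≤ y)
    (hyz : y ≤ z) (hodd : ∀ p, flipCount w p x z = 0 ∨ Odd (flipCount w p x z)) :
    dW n W (w x) (w z) = dW n W (w x) (w y) + dW n W (w y) (w z) := by
  have hsum (p) := flipCount_add (w := w) (p := p) hxy hyz
  have hdisj : Disjoint (dsc n (w x) (w y)) (dsc n (w y) (w z)) := by
    refine disjoint_left.2 fun p h₁ h₂ => ?_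
    rw [mem_dsc_iff_odd_flipCount hxy, Nat.odd_iff] at h₁
    rw [mem_dsc_iff_odd_flipCount hyz, Nat.odd_iff] at h₂
    have := hsum p
    rcases hodd p with h | ⟨c, hc⟩ <;> omega
  have hunion : dsc n (w x) (w y) ∪ dsc n (w y) (w z) = dsc n (w x) (w z) := by
    ext p
    simp only [mem_union, mem_dsc_iff_odd_flipCount hxy, mem_dsc_iff_odd_flipCount hyz,
      mem_dsc_iff_odd_flipCount (hxy.trans hyz), Nat.odd_iff]
    have := hsum p
    rcases hodd p with h | ⟨c, hc⟩ <;> omega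
  rw [dW, dW, dW, ← hunion, sum_union hdisj, add_div]

end Walk

/-- The distance relations of a pseudolinear quadruple with `s = d x₁ x₂` and `t = d x₂ x₃`,
without positivity of `s` and `t`. -/
def PseudolinearRelations {α : Type*} (d : α → α → ℝ) (x₁ x₂ x₃ x₄ : α) : Prop :=
  d x₃ x₄ = d x₁ x₂ ∧ d x₁ x₄ = d x₂ x₃ ∧
    d x₁ x₃ = d x₁ x₂ + d x₂ x₃ ∧ d x₂ x₄ = d x₁ x₂ + d x₂ x₃

namespace PseudolinearRelations

variable {α : Type*} {d : α → α → ℝ} {x₁ x₂ x₃ x₄ : α}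

lemma swap (hd : ∀ x y, d x y = d y x) (h : PseudolinearRelations d x₁ x₂ x₃ x₄) :
    PseudolinearRelations d x₂ x₁ x₄ x₃ := by
  obtain ⟨h₁, h₂, h₃, h₄⟩ := h
  refine ⟨?_, ?_, ?_, ?_⟩ <;> simp only [hd x₂ x₁, hd x₄ x₃, hd x₁ x₄] at * <;>
    linarith

lemma antipode (hd : ∀ x y, d x y = d y x) (h : PseudolinearRelations d x₁ x₂ x₃ x₄) :
    PseudolinearRelations d x₁ x₄ x₃ x₂ := by
  obtain ⟨h₁, h₂, h₃, h₄⟩ := h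
  refine ⟨?_, ?_, ?_, ?_⟩ <;> simp only [hd x₃ x₂, hd x₄ x₃, hd x₄ x₂] at * <;>
    linarith

end PseudolinearRelations

section SymmetricWalk

variable {n m : ℕ} {w : ℕ → Perm (Fin n)}

lemma dsc_add_add (hsym : LabelsPeriodic w m) {k l : ℕ} (hkl : k ≤ l) :
    dsc n (w (k + m)) (w (l + m)) = dsc n (w k) (w l) := by
  ext p
  rw [mem_dsc_iff_odd_flipCount (by omega), mem_dsc_iff_odd_flipCount hkl,
    flipCount_add_add hsym]

lemma dsc_add_swap (hsym : LabelsPeriodic w m)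
    {x y : ℕ} (hxy : x ≤ y) (hyx : y ≤ x + m) :
    dsc n (w x) (w (y + m)) = dsc n (w y) (w (x + m)) := by
  ext p
  have h₁ := flipCount_add (w := w) (p := p) hxy hyx
  have h₂ := flipCount_add (w := w) (p := p) (hxy.trans hyx) (Nat.add_le_add_right hxy m)
  have h₃ := flipCount_add_add hsym p x y
  rw [mem_dsc_iff_odd_flipCount (by omega), mem_dsc_iff_odd_flipCount hyx, Nat.odd_iff,
    Nat.odd_iff]
  omega

lemma dW_antipodal_eq_add (hsym : LabelsPeriodic w m)
    (hodd : ∀ p, flipCount w p 0 m = 0 ∨ Odd (flipCount w p 0 m))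
    (W : Fin n → Fin n → ℝ) {x y : ℕ} (hxy : x ≤ y) (hyx : y ≤ x + m) :
    dW n W (w x) (w (x + m)) = dW n W (w x) (w y) + dW n W (w y) (w (x + m)) :=
  dW_eq_add_of_flipCount hxy hyx fun p => by rw [flipCount_self_add hsym]; exact hodd p

lemma pseudolinearRelations_of_le_of_le (hsym : LabelsPeriodic w m)
    (hodd : ∀ p, flipCount w p 0 m = 0 ∨ Odd (flipCount w p 0 m))
    (W : Fin n → Fin n → ℝ) {x y : ℕ} (hxy : x ≤ y) (hyx : y ≤ x + m) :
    PseudolinearRelations (dW n W) (w x) (w y) (w (x + m)) (w (y + m)) := by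
  have hshift : dW n W (w (x + m)) (w (y + m)) = dW n W (w x) (w y) := by
    rw [dW, dW, dsc_add_add hsym hxy]
  refine ⟨hshift, ?_, dW_antipodal_eq_add hsym hodd W hxy hyx, ?_⟩
  · rw [dW, dW, dsc_add_swap hsym hxy hyx]
  · rw [dW_antipodal_eq_add hsym hodd W (x := y) (y := x + m) hyx (by omega), hshift,
      add_comm]

lemma pseudolinearRelations_of_lt_two_mul (hsym : LabelsPeriodic w m)
    (hodd : ∀ p, flipCount w p 0 m = 0 ∨ Odd (flipCount w p 0 m))
    (hw : Periodic w (2 * m)) (W : Fin n → Fin n → ℝ) {a b : ℕ} (ha : a < 2 * m)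
    (hb : b < 2 * m) :
    PseudolinearRelations (dW n W) (w a) (w b) (w (a + m)) (w (b + m)) := by
  have key : ∀ {x y}, x ≤ y → y < x + 2 * m →
      PseudolinearRelations (dW n W) (w x) (w y) (w (x + m)) (w (y + m)) := by
    intro x y hxy hyx
    rcases le_or_gt y (x + m) with h | h
    · exact pseudolinearRelations_of_le_of_le hsym hodd W hxy h
    · have := (pseudolinearRelations_of_le_of_le hsym hodd W (x := x) (y := y - m) (by omega)
        (by omega)).antipode (dW_comm n W)
      rwa [Nat.sub_add_cancel (by omega), ← hw (y - m),
        show y - m + 2 * m = y + m by omega] at this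
  rcases le_total a b with h | h
  · exact key h (by omega)
  · exact (key h (by omega)).swap (dW_comm n W)

end SymmetricWalk

section Cycle

variable {n m : ℕ} {v : ℕ → Perm (Fin n)}

def cycleWalk (m : ℕ) (v : ℕ → Perm (Fin n)) (k : ℕ) : Perm (Fin n) :=
  v (k % (2 * m))

lemma cycleWalk_periodic : Periodic (cycleWalk m v) (2 * m) := fun k => by
  simp [cycleWalk]

lemma cycleWalk_of_lt {k : ℕ} (hk : k < 2 * m) : cycleWalk m v k = v k := by
  rw [cycleWalk, Nat.mod_eq_of_lt hk]

lemma periodic_dsc_cycleWalk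
    (hsym : ∀ k < 2 * m,
      dsc n (v k) (v ((k + 1) % (2 * m))) =
        dsc n (v ((k + m) % (2 * m))) (v ((k + m + 1) % (2 * m)))) :
    LabelsPeriodic (cycleWalk m v) m := by
  intro k
  rcases Nat.eq_zero_or_pos m with rfl | hm
  · rfl
  have hmod (j : ℕ) : (k + j) % (2 * m) = (k % (2 * m) + j) % (2 * m) :=
    (Nat.mod_add_mod k _ j).symm
  simp only [cycleWalk, add_assoc, hmod]
  exact (hsym _ (Nat.mod_lt _ (by omega))).symm

lemma flipCount_cycleWalk (p : Fin n × Fin n) :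
    flipCount (cycleWalk m v) p 0 (2 * m) =
      #{k ∈ range (2 * m) | p ∈ dsc n (v k) (v ((k + 1) % (2 * m)))} := by
  rw [flipCount, range_eq_Ico]
  refine congrArg card (filter_congr fun k hk => ?_)
  rw [cycleWalk_of_lt (mem_Ico.1 hk).2]
  rfl

lemma flipCount_half_eq_zero_or_odd
    (hsym : LabelsPeriodic (cycleWalk m v) m)
    (hcount : ∀ p : Fin n × Fin n,
      (∃ k < 2 * m, p ∈ dsc n (v k) (v ((k + 1) % (2 * m)))) →
      ∃ r : ℕ, 0 < r ∧
        ((Finset.range (2 * m)).filter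
          (fun k => p ∈ dsc n (v k) (v ((k + 1) % (2 * m))))).card = 2 * (2 * r - 1))
    (p : Fin n × Fin n) :
    flipCount (cycleWalk m v) p 0 m = 0 ∨ Odd (flipCount (cycleWalk m v) p 0 m) := by
  have hdouble :
      flipCount (cycleWalk m v) p 0 (2 * m) = 2 * flipCount (cycleWalk m v) p 0 m := by
    have := flipCount_add_add hsym p 0 m
    rw [zero_add, ← two_mul] at this
    rw [← flipCount_add (Nat.zero_le m) (by omega), this, two_mul]
  rcases Nat.eq_zero_or_pos (flipCount (cycleWalk m v) p 0 m) with h | h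
  · exact .inl h
  have hlabel : 0 < #{k ∈ range (2 * m) | p ∈ dsc n (v k) (v ((k + 1) % (2 * m)))} := by
    rw [← flipCount_cycleWalk, hdouble]
    omega
  obtain ⟨k, hk⟩ := card_pos.1 hlabel
  rw [mem_filter, mem_range] at hk
  obtain ⟨r, hr, hcard⟩ := hcount p ⟨k, hk⟩
  rw [← flipCount_cycleWalk, hdouble] at hcard
  exact .inr ⟨r - 1, by omega⟩

end Cycle

theorem cycle_pseudolinear_quadruple_general (n m : ℕ)
    (W : Fin n → Fin n → ℝ) (hW : IsWeight n W)
    (hpos : ∀ i j : Fin n, i < j → 0 < W i j)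
    (v : ℕ → Equiv.Perm (Fin n))
    (hdistinct : ∀ k < 2 * m, ∀ l < 2 * m, v k = v l → k = l)
    (hsym : ∀ k < 2 * m,
      dsc n (v k) (v ((k + 1) % (2 * m))) =
        dsc n (v ((k + m) % (2 * m))) (v ((k + m + 1) % (2 * m))))
    (hcount : ∀ p : Fin n × Fin n,
      (∃ k < 2 * m, p ∈ dsc n (v k) (v ((k + 1) % (2 * m)))) →
      ∃ r : ℕ, 0 < r ∧
        ((Finset.range (2 * m)).filter
          (fun k => p ∈ dsc n (v k) (v ((k + 1) % (2 * m))))).card = 2 * (2 * r - 1))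
    (a b : ℕ) (ha : a < 2 * m) (hb : b < 2 * m)
    (hab : a ≠ b) (hopp : b ≠ (a + m) % (2 * m)) :
    ∃ s t : ℝ, 0 < s ∧ 0 < t ∧
      dW n W (v a) (v b) = s ∧
      dW n W (v ((a + m) % (2 * m))) (v ((b + m) % (2 * m))) = s ∧
      dW n W (v b) (v ((a + m) % (2 * m))) = t ∧
      dW n W (v a) (v ((b + m) % (2 * m))) = t ∧
      dW n W (v a) (v ((a + m) % (2 * m))) = s + t ∧
      dW n W (v b) (v ((b + m) % (2 * m))) = s + t := by
  have hlabels := periodic_dsc_cycleWalk hsym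
  have hrel := pseudolinearRelations_of_lt_two_mul hlabels
    (flipCount_half_eq_zero_or_odd hlabels hcount) cycleWalk_periodic W ha hb
  rw [cycleWalk_of_lt ha, cycleWalk_of_lt hb] at hrel
  obtain ⟨h₁, h₂, h₃, h₄⟩ := hrel
  have hs : 0 < dW n W (v a) (v b) := dW_pos hW hpos fun h => hab (hdistinct a ha b hb h)
  have ht : 0 < dW n W (v b) (v ((a + m) % (2 * m))) :=
    dW_pos hW hpos fun h => hopp (hdistinct b hb _ (Nat.mod_lt _ (by omega)) h)
  exact ⟨_, _, hs, ht, rfl, h₁, rfl, h₂, h₃, h₄⟩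

/-- Let `n ≥ 3`, let `W` be a weight with positive entries above the diagonal,
and let `v 0, …, v (2m-1)` be a simple cycle of even length `2m` in `G_n`
(distinct vertices, consecutive ones adjacent, indices mod `2m`) with a
symmetric labeling: the label (the unique discordant pair) of each edge equals
that of the opposite edge. Suppose every label occurring on the cycle labels
exactly `2(2k-1)` edges of the cycle for some positive integer `k`. Then for
any two distinct non-opposite vertices `π = v a`, `φ = v b` of the cycle, the
points `π, φ` and their opposites `π̄ = v (a+m)`, `φ̄ = v (b+m)` form a
pseudolinear quadruple in `(S_n, d_W)`. -/
theorem cycle_pseudolinear_quadruple (n m : ℕ) (hn : 3 ≤ n) (hm : 2 ≤ m)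
    (W : Fin n → Fin n → ℝ) (hW : IsWeight n W)
    (hpos : ∀ i j : Fin n, i < j → 0 < W i j)
    (v : ℕ → Equiv.Perm (Fin n))
    (hdistinct : ∀ k < 2 * m, ∀ l < 2 * m, v k = v l → k = l)
    (hadj : ∀ k < 2 * m, (Gn n).Adj (v k) (v ((k + 1) % (2 * m))))
    (hsym : ∀ k < 2 * m,
      dsc n (v k) (v ((k + 1) % (2 * m))) =
        dsc n (v ((k + m) % (2 * m))) (v ((k + m + 1) % (2 * m))))
    (hcount : ∀ p : Fin n × Fin n,
      (∃ k < 2 * m, p ∈ dsc n (v k) (v ((k + 1) % (2 * m)))) →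
      ∃ r : ℕ, 0 < r ∧
        ((Finset.range (2 * m)).filter
          (fun k => p ∈ dsc n (v k) (v ((k + 1) % (2 * m))))).card = 2 * (2 * r - 1))
    (a b : ℕ) (ha : a < 2 * m) (hb : b < 2 * m)
    (hab : a ≠ b) (hopp : b ≠ (a + m) % (2 * m)) :
    ∃ s t : ℝ, 0 < s ∧ 0 < t ∧
      dW n W (v a) (v b) = s ∧
      dW n W (v ((a + m) % (2 * m))) (v ((b + m) % (2 * m))) = s ∧
      dW n W (v b) (v ((a + m) % (2 * m))) = t ∧
      dW n W (v a) (v ((b + m) % (2 * m))) = t ∧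
      dW n W (v a) (v ((a + m) % (2 * m))) = s + t ∧
      dW n W (v b) (v ((b + m) % (2 * m))) = s + t :=
  cycle_pseudolinear_quadruple_general n m W hW hpos v hdistinct hsym hcount a b ha hb hab hopp
end

section
/- Let n ≥ 3 and let W be a weight with w_{i,j} > 0 for all 1 ≤ i < j ≤ n such that any two distinct subsets of index pairs have distinct weight sums, i.e., for all distinct sets S_1, S_2 of pairs (i,j) with i < j one has Σ_{(i,j)∈S_1} w_{i,j} ≠ Σ_{(i,j)∈S_2} w_{i,j}. Let π, φ, π̄, φ̄ ∈ S_n be pairwise distinct. Then the following are equivalent: (i) d_W(π,φ) = d_W(π̄,φ̄), d_W(φ,π̄) = d_W(φ̄,π), and d_W(π,π̄) = d_W(φ,φ̄) = d_W(π,φ) + d_W(φ,π̄) (i.e., {π,φ,π̄,φ̄} form a pseudolinear quadruple with diametrical pairs (π,π̄) and (φ,φ̄)); (ii) dsc(π,φ) = dsc(π̄,φ̄), dsc(φ,π̄) = dsc(φ̄,π), and dsc(π,φ) ∩ dsc(φ,π̄) = ∅. -/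
open Finset
open scoped symmDiff

/-! Discordance sets compose by symmetric difference: `dsc(π,ψ) = dsc(π,φ) ∆ dsc(φ,ψ)`, since a
pair is discordant for `π, ψ` exactly when it is discordant for one of `π, φ` and `φ, ψ`.
Because distinct sets of pairs have distinct weights, `d_W(α,β) = d_W(γ,δ)` is the same as
`dsc(α,β) = dsc(γ,δ)`, and `d_W(π,π̄) = d_W(π,φ) + d_W(φ,π̄)` says that the weight of
`dsc(π,φ) ∩ dsc(φ,π̄)`, counted twice, vanishes, i.e. that these two sets are disjoint.
The remaining condition `dsc(π,π̄) = dsc(φ,φ̄)` then follows from the other two. -/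

section SignOfProduct

variable {R : Type*} [CommRing R] [LinearOrder R] [IsStrictOrderedRing R]

theorem mul_neg_iff_xor {x y : R} (hx : x ≠ 0) (hy : y ≠ 0) :
    x * y < 0 ↔ Xor (x < 0) (y < 0) := by
  rw [mul_neg_iff]
  rcases hx.lt_or_gt with hx | hx <;> rcases hy.lt_or_gt with hy | hy <;>
    simp [xor_def, hx, hy, hx.not_gt, hy.not_gt]

theorem mul_neg_iff_xor_mul_neg {a b c : R} (ha : a ≠ 0) (hb : b ≠ 0) (hc : c ≠ 0) :
    a * c < 0 ↔ Xor (a * b < 0) (b * c < 0) := by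
  simp only [mul_neg_iff_xor, ha, hb, hc, ne_eq, not_false_eq_true, xor_def]
  tauto

end SignOfProduct

section SubsetSums

variable {ι M : Type*} [DecidableEq ι]

theorem sum_symmDiff_add_sum_inter_add_sum_inter [AddCommMonoid M] (f : ι → M)
    (A B : Finset ι) :
    ∑ i ∈ A ∆ B, f i + (∑ i ∈ A ∩ B, f i + ∑ i ∈ A ∩ B, f i) =
      ∑ i ∈ A, f i + ∑ i ∈ B, f i := by
  have hdisj : Disjoint (A ∆ B) (A ∩ B) := disjoint_symmDiff_inf A B
  have hunion : A ∆ B ∪ A ∩ B = A ∪ B := symmDiff_sup_inf A B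
  rw [← add_assoc, ← sum_union hdisj, hunion, sum_union_inter]

theorem sum_symmDiff_eq_add_iff_disjoint [NonAssocRing M] [NoZeroDivisors M] [CharZero M]
    (f : ι → M) {U A B : Finset ι}
    (hinj : Set.InjOn (fun S => ∑ i ∈ S, f i) {S | S ⊆ U}) (hA : A ⊆ U) :
    ∑ i ∈ A ∆ B, f i = ∑ i ∈ A, f i + ∑ i ∈ B, f i ↔ Disjoint A B := by
  rw [← sum_symmDiff_add_sum_inter_add_sum_inter, left_eq_add, add_self_eq_zero,
    disjoint_iff_inter_eq_empty]
  constructor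
  · intro h
    exact hinj (inter_subset_left.trans hA) (empty_subset U) (h.trans sum_empty.symm)
  · intro h
    rw [h, sum_empty]

end SubsetSums

section Discordance

variable {n : ℕ}

theorem dsc_subset_pairs (π φ : Equiv.Perm (Fin n)) : dsc n π φ ⊆ pairs n :=
  filter_subset _ _

theorem sub_ne_zero_of_mem_pairs (π : Equiv.Perm (Fin n)) {p : Fin n × Fin n}
    (hp : p ∈ pairs n) : (π p.2 : ℤ) - (π p.1 : ℤ) ≠ 0 := by
  have hlt : p.1 < p.2 := (mem_filter.mp hp).2
  have hne : π p.2 ≠ π p.1 := π.injective.ne hlt.ne'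
  rw [sub_ne_zero]
  exact_mod_cast Fin.val_injective.ne hne

theorem dsc_eq_symmDiff (π φ ψ : Equiv.Perm (Fin n)) :
    dsc n π ψ = dsc n π φ ∆ dsc n φ ψ := by
  ext p
  by_cases hp : p ∈ pairs n
  · simp only [mem_symmDiff, dsc, mem_filter, hp, true_and]
    exact mul_neg_iff_xor_mul_neg (sub_ne_zero_of_mem_pairs π hp)
      (sub_ne_zero_of_mem_pairs φ hp) (sub_ne_zero_of_mem_pairs ψ hp)
  · simp [mem_symmDiff, dsc, hp]

variable {W : Fin n → Fin n → ℝ}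

theorem dW_eq_dW_iff (hD : ∑ p ∈ pairs n, W p.1 p.2 ≠ 0)
    (hinj : Set.InjOn (fun S => ∑ p ∈ S, W p.1 p.2) {S | S ⊆ pairs n})
    {α β γ δ : Equiv.Perm (Fin n)} :
    dW n W α β = dW n W γ δ ↔ dsc n α β = dsc n γ δ := by
  rw [dW, dW, div_left_inj' hD]
  exact hinj.eq_iff (dsc_subset_pairs α β) (dsc_subset_pairs γ δ)

theorem dW_eq_dW_add_dW_iff (hD : ∑ p ∈ pairs n, W p.1 p.2 ≠ 0)
    (hinj : Set.InjOn (fun S => ∑ p ∈ S, W p.1 p.2) {S | S ⊆ pairs n})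
    {π φ ψ : Equiv.Perm (Fin n)} :
    dW n W π ψ = dW n W π φ + dW n W φ ψ ↔ Disjoint (dsc n π φ) (dsc n φ ψ) := by
  rw [dW, dW, dW, ← add_div, div_left_inj' hD, dsc_eq_symmDiff π φ ψ]
  exact sum_symmDiff_eq_add_iff_disjoint (fun p => W p.1 p.2) hinj (dsc_subset_pairs π φ)

end Discordance

theorem pseudolinear_iff_dsc_general (n : ℕ)
    (W : Fin n → Fin n → ℝ) (hW : IsWeight n W)
    (hsums : ∀ S₁ S₂ : Finset (Fin n × Fin n),
      S₁ ⊆ pairs n → S₂ ⊆ pairs n → S₁ ≠ S₂ →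
      (∑ p ∈ S₁, W p.1 p.2) ≠ ∑ p ∈ S₂, W p.1 p.2)
    (π φ π' φ' : Equiv.Perm (Fin n)) :
    (dW n W π φ = dW n W π' φ' ∧ dW n W φ π' = dW n W φ' π ∧
      dW n W π π' = dW n W φ φ' ∧
      dW n W π π' = dW n W π φ + dW n W φ π') ↔
    (dsc n π φ = dsc n π' φ' ∧ dsc n φ π' = dsc n φ' π ∧
      dsc n π φ ∩ dsc n φ π' = ∅) := by
  have hD : ∑ p ∈ pairs n, W p.1 p.2 ≠ 0 := hW.2.2.ne'
  have hinj : Set.InjOn (fun S => ∑ p ∈ S, W p.1 p.2) {S | S ⊆ pairs n} :=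
    fun S₁ h₁ S₂ h₂ h => by_contra fun hne => hsums S₁ S₂ h₁ h₂ hne h
  rw [dW_eq_dW_iff hD hinj, dW_eq_dW_iff hD hinj, dW_eq_dW_iff hD hinj,
    dW_eq_dW_add_dW_iff hD hinj, ← disjoint_iff_inter_eq_empty]
  constructor
  · rintro ⟨hπφ, hφπ', -, hdisj⟩
    exact ⟨hπφ, hφπ', hdisj⟩
  · rintro ⟨hπφ, hφπ', hdisj⟩
    refine ⟨hπφ, hφπ', ?_, hdisj⟩
    rw [dsc_eq_symmDiff π φ π', dsc_eq_symmDiff φ π' φ', ← hπφ, symmDiff_comm]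

/-- Let `n ≥ 3` and let `W` be a weight with positive entries above the
diagonal such that any two distinct sets of index pairs have distinct weight
sums. Let `π, φ, π̄, φ̄ ∈ S_n` be pairwise distinct. Then
`{π, φ, π̄, φ̄}` forms a pseudolinear quadruple with diametrical pairs
`(π,π̄)`, `(φ,φ̄)` (condition (i)) iff `dsc(π,φ) = dsc(π̄,φ̄)`,
`dsc(φ,π̄) = dsc(φ̄,π)` and `dsc(π,φ) ∩ dsc(φ,π̄) = ∅` (condition (ii)). -/
theorem pseudolinear_iff_dsc (n : ℕ) (hn : 3 ≤ n)
    (W : Fin n → Fin n → ℝ) (hW : IsWeight n W)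
    (hpos : ∀ i j : Fin n, i < j → 0 < W i j)
    (hsums : ∀ S₁ S₂ : Finset (Fin n × Fin n),
      S₁ ⊆ pairs n → S₂ ⊆ pairs n → S₁ ≠ S₂ →
      (∑ p ∈ S₁, W p.1 p.2) ≠ ∑ p ∈ S₂, W p.1 p.2)
    (π φ π' φ' : Equiv.Perm (Fin n))
    (h1 : π ≠ φ) (h2 : π ≠ π') (h3 : π ≠ φ')
    (h4 : φ ≠ π') (h5 : φ ≠ φ') (h6 : π' ≠ φ') :
    (dW n W π φ = dW n W π' φ' ∧ dW n W φ π' = dW n W φ' π ∧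
      dW n W π π' = dW n W φ φ' ∧
      dW n W π π' = dW n W π φ + dW n W φ π') ↔
    (dsc n π φ = dsc n π' φ' ∧ dsc n φ π' = dsc n φ' π ∧
      dsc n π φ ∩ dsc n φ π' = ∅) :=
  pseudolinear_iff_dsc_general n W hW hsums π φ π' φ'
end
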